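/- Suppose there is a constant c such that for every mean-zero square-integrable B-valued X, limsup_{r→∞} sup_{n≥1} r² P(T_r ≤ n)/n ≤ c E‖X‖². Then for every such X, limsup_{n→∞} E‖S_n‖²/n ≤ (4 + 9c) E‖X‖²; in particular B is type 2. -/

import Mathlib

open MeasureTheory ProbabilityTheory Set Filter
open scoped ENNReal NNReal Topology

/-- The first exit time of the random walk with steps `X` from the closed ball of
radius `r` (valued in `ℕ∞`, equal to `⊤` if the walk never exits). -/
noncomputable def exitTime {Ω B : Type*} [NormedAddCommGroup B]
    (X : ℕ → Ω → B) (r : ℝ) (ω : Ω) : ℕ∞ :=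
  sInf {n : ℕ∞ | ∃ m : ℕ, n = m ∧ r < ‖∑ k ∈ Finset.range m, X k ω‖}

/-! The variance of a Lipschitz function of a sum of independent steps is at most the sum of
the second moments of the steps: averaging the function over the last step gives a function with
the same Lipschitz constant, and conditioning on the first steps loses at most the second moment
of the last one. In particular `Var ‖Sₙ‖ ≤ n E‖X‖²`. The hypothesis yields, for large `r`, the tail
bound `P(‖Sₙ‖ > r) ≤ P(T_r ≤ n) ≤ a n / r²` for any `a > c E‖X‖²`; integrating it beyond
`√(a n)` gives `E‖Sₙ‖ ≤ 2 √(a n)`, so `E‖Sₙ‖² = Var ‖Sₙ‖ + (E‖Sₙ‖)² ≤ (E‖X‖² + 4 a) n`. -/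

theorem LipschitzWith.memLp_comp {Ω E F : Type*} [MeasurableSpace Ω] {μ : Measure Ω}
    [IsFiniteMeasure μ] [NormedAddCommGroup E] [NormedAddCommGroup F] {K : ℝ≥0} {φ : E → F}
    {p : ℝ≥0∞} {f : Ω → E} (hφ : LipschitzWith K φ) (hf : MemLp f p μ) :
    MemLp (fun ω ↦ φ (f ω)) p μ := by
  have h0 : MemLp (fun ω ↦ φ (f ω) - φ 0) p μ :=
    (hφ.sub (LipschitzWith.const (φ 0))).comp_memLp (sub_self _) hf
  simpa [Pi.add_def] using h0.add (memLp_const (φ 0))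

section IndepCopy

variable {Ω β γ E : Type*} [MeasurableSpace Ω] [MeasurableSpace β] [MeasurableSpace γ]
  [NormedAddCommGroup E] {μ : Measure Ω} [IsFiniteMeasure μ]
  {U : Ω → β} {V : Ω → γ} {F : β × γ → E}

theorem ProbabilityTheory.IndepFun.integrable_prod_map (hUV : U ⟂ᵢ[μ] V)
    (hU : AEMeasurable U μ) (hV : AEMeasurable V μ) (hF : StronglyMeasurable F)
    (hFi : Integrable (fun ω ↦ F (U ω, V ω)) μ) :
    Integrable F ((μ.map U).prod (μ.map V)) := by
  rw [← (indepFun_iff_map_prod_eq_prod_map_map hU hV).1 hUV]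
  exact (integrable_map_measure hF.aestronglyMeasurable (hU.prodMk hV)).2 hFi

theorem ProbabilityTheory.IndepFun.integrable_integral_comp [NormedSpace ℝ E]
    (hUV : U ⟂ᵢ[μ] V) (hU : AEMeasurable U μ) (hV : AEMeasurable V μ) (hF : StronglyMeasurable F)
    (hFi : Integrable (fun ω ↦ F (U ω, V ω)) μ) :
    Integrable (fun ω ↦ ∫ ω', F (U ω, V ω') ∂μ) μ := by
  have h := (hUV.integrable_prod_map hU hV hF hFi).integral_prod_left
  have hinner : ∀ s, ∫ y, F (s, y) ∂(μ.map V) = ∫ ω', F (s, V ω') ∂μ := fun s ↦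
    integral_map hV (hF.comp_measurable measurable_prodMk_left).aestronglyMeasurable
  simpa only [hinner, Function.comp_def] using
    (integrable_map_measure h.aestronglyMeasurable hU).1 h

theorem ProbabilityTheory.IndepFun.integral_comp_eq_integral_integral [NormedSpace ℝ E]
    [CompleteSpace E] (hUV : U ⟂ᵢ[μ] V) (hU : AEMeasurable U μ) (hV : AEMeasurable V μ)
    (hF : StronglyMeasurable F) (hFi : Integrable (fun ω ↦ F (U ω, V ω)) μ) :
    ∫ ω, F (U ω, V ω) ∂μ = ∫ ω, ∫ ω', F (U ω, V ω') ∂μ ∂μ := by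
  have hFi' := hUV.integrable_prod_map hU hV hF hFi
  have hinner : ∀ s, ∫ y, F (s, y) ∂(μ.map V) = ∫ ω', F (s, V ω') ∂μ := fun s ↦
    integral_map hV (hF.comp_measurable measurable_prodMk_left).aestronglyMeasurable
  calc ∫ ω, F (U ω, V ω) ∂μ = ∫ p, F p ∂(μ.map fun ω ↦ (U ω, V ω)) :=
        (integral_map (hU.prodMk hV) hF.aestronglyMeasurable).symm
    _ = ∫ s, ∫ y, F (s, y) ∂(μ.map V) ∂(μ.map U) := by
        rw [(indepFun_iff_map_prod_eq_prod_map_map hU hV).1 hUV, integral_prod _ hFi']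
    _ = ∫ ω, ∫ y, F (U ω, y) ∂(μ.map V) ∂μ :=
        integral_map hU hFi'.integral_prod_left.aestronglyMeasurable
    _ = ∫ ω, ∫ ω', F (U ω, V ω') ∂μ ∂μ := by simp only [hinner]

end IndepCopy

section Variance

variable {Ω E : Type*} [MeasurableSpace Ω] {μ : Measure Ω} [IsProbabilityMeasure μ]
  [NormedAddCommGroup E] {K : ℝ≥0} {φ : E → ℝ}

theorem integral_sub_const_sq {X : Ω → ℝ} (hX : MemLp X 2 μ) (c : ℝ) :
    ∫ ω, (X ω - c) ^ 2 ∂μ = Var[X; μ] + (μ[X] - c) ^ 2 := by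
  have h := variance_eq_sub (X := fun ω ↦ X ω - c) (hX.sub (memLp_const c))
  rw [variance_sub_const hX.aestronglyMeasurable,
    integral_sub (hX.integrable one_le_two) (integrable_const c)] at h
  simp only [Pi.pow_apply, integral_const, probReal_univ, smul_eq_mul, one_mul] at h
  linarith

theorem LipschitzWith.variance_comp_le (hφ : LipschitzWith K φ) {V : Ω → E} (hV : MemLp V 2 μ)
    (a : E) : Var[fun ω ↦ φ (V ω); μ] ≤ K ^ 2 * ∫ ω, ‖V ω - a‖ ^ 2 ∂μ := by
  have hφV := hφ.memLp_comp hV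
  have hpt : ∀ x, (φ x - φ a) ^ 2 ≤ K ^ 2 * ‖x - a‖ ^ 2 := fun x ↦ by
    rw [← mul_pow, ← sq_abs, ← Real.dist_eq, ← dist_eq_norm]
    exact pow_le_pow_left₀ dist_nonneg (hφ.dist_le_mul x a) 2
  calc Var[fun ω ↦ φ (V ω); μ] ≤ ∫ ω, (φ (V ω) - φ a) ^ 2 ∂μ := by
        rw [integral_sub_const_sq hφV]
        exact le_add_of_nonneg_right (sq_nonneg _)
    _ ≤ ∫ ω, K ^ 2 * ‖V ω - a‖ ^ 2 ∂μ :=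
        integral_mono (hφV.sub (memLp_const _)).integrable_sq
          ((hV.sub (memLp_const a)).norm.integrable_sq.const_mul _) fun ω ↦ hpt (V ω)
    _ = K ^ 2 * ∫ ω, ‖V ω - a‖ ^ 2 ∂μ := integral_const_mul _ _

theorem LipschitzWith.integral_comp_add (hφ : LipschitzWith K φ) {V : Ω → E}
    (hV : Integrable V μ) : LipschitzWith K (fun s ↦ ∫ ω, φ (s + V ω) ∂μ) := by
  have hi : ∀ s, Integrable (fun ω ↦ φ (s + V ω)) μ := fun s ↦ memLp_one_iff_integrable.1
    (hφ.memLp_comp ((memLp_const s).add (memLp_one_iff_integrable.2 hV)))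
  refine LipschitzWith.of_dist_le_mul fun s t ↦ ?_
  rw [dist_eq_norm, ← integral_sub (hi s) (hi t)]
  refine (norm_integral_le_of_norm_le_const (C := K * dist s t)
    (ae_of_all _ fun ω ↦ ?_)).trans_eq (by simp)
  rw [← dist_eq_norm, ← dist_add_right s t (V ω)]
  exact hφ.dist_le_mul _ _

variable [MeasurableSpace E] [BorelSpace E] [SecondCountableTopology E]

theorem LipschitzWith.variance_comp_add_le (hφ : LipschitzWith K φ) {U V : Ω → E}
    (hUV : U ⟂ᵢ[μ] V) (hU : MemLp U 2 μ) (hV : MemLp V 2 μ) :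
    Var[fun ω ↦ φ (U ω + V ω); μ]
      ≤ Var[fun ω ↦ ∫ ω', φ (U ω + V ω') ∂μ; μ] + K ^ 2 * ∫ ω, ‖V ω‖ ^ 2 ∂μ := by
  have hφc := hφ.continuous
  set ψ : E → ℝ := fun s ↦ ∫ ω', φ (s + V ω') ∂μ
  have hψ : LipschitzWith K ψ := hφ.integral_comp_add (hV.integrable one_le_two)
  have hφUV : MemLp (fun ω ↦ φ (U ω + V ω)) 2 μ := hφ.memLp_comp (hU.add hV)
  have hψU : MemLp (fun ω ↦ ψ (U ω)) 2 μ := hψ.memLp_comp hU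
  set m := μ[fun ω ↦ φ (U ω + V ω)]
  have hm : μ[fun ω ↦ ψ (U ω)] = m :=
    (hUV.integral_comp_eq_integral_integral (F := fun p ↦ φ (p.1 + p.2)) hU.aemeasurable
      hV.aemeasurable (by fun_prop : Continuous _).stronglyMeasurable
      (hφUV.integrable one_le_two)).symm
  have hinner : ∀ s,
      ∫ ω', (φ (s + V ω') - m) ^ 2 ∂μ ≤ (ψ s - m) ^ 2 + K ^ 2 * ∫ ω, ‖V ω‖ ^ 2 ∂μ := by
    intro s
    have hsV : MemLp (fun ω ↦ s + V ω) 2 μ := (memLp_const s).add hV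
    have hvar := hφ.variance_comp_le hsV s
    simp only [add_sub_cancel_left] at hvar
    rw [integral_sub_const_sq (hφ.memLp_comp hsV)]
    linarith
  have hF : StronglyMeasurable fun p : E × E ↦ (φ (p.1 + p.2) - m) ^ 2 :=
    (by fun_prop : Continuous _).stronglyMeasurable
  have hFi : Integrable (fun ω ↦ (φ (U ω + V ω) - m) ^ 2) μ :=
    (hφUV.sub (memLp_const m)).integrable_sq
  have hψUi : Integrable (fun ω ↦ (ψ (U ω) - m) ^ 2) μ :=
    (hψU.sub (memLp_const m)).integrable_sq
  calc Var[fun ω ↦ φ (U ω + V ω); μ] = ∫ ω, (φ (U ω + V ω) - m) ^ 2 ∂μ :=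
        variance_eq_integral hφUV.aemeasurable
    _ = ∫ ω, ∫ ω', (φ (U ω + V ω') - m) ^ 2 ∂μ ∂μ :=
        hUV.integral_comp_eq_integral_integral hU.aemeasurable hV.aemeasurable hF hFi
    _ ≤ ∫ ω, ((ψ (U ω) - m) ^ 2 + K ^ 2 * ∫ ω, ‖V ω‖ ^ 2 ∂μ) ∂μ :=
        integral_mono (hUV.integrable_integral_comp hU.aemeasurable hV.aemeasurable hF hFi)
          (hψUi.add (integrable_const _)) fun ω ↦ hinner (U ω)
    _ = Var[fun ω ↦ ψ (U ω); μ] + K ^ 2 * ∫ ω, ‖V ω‖ ^ 2 ∂μ := by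
        rw [integral_add hψUi (integrable_const _), integral_const,
          variance_eq_integral hψU.aemeasurable, hm]
        simp

theorem LipschitzWith.variance_comp_sum_le (hφ : LipschitzWith K φ) {X : ℕ → Ω → E}
    (hX : ∀ i, Measurable (X i)) (hind : iIndepFun X μ) (hX2 : ∀ i, MemLp (X i) 2 μ) (n : ℕ) :
    Var[fun ω ↦ φ (∑ k ∈ Finset.range n, X k ω); μ]
      ≤ K ^ 2 * ∑ k ∈ Finset.range n, ∫ ω, ‖X k ω‖ ^ 2 ∂μ := by
  induction n generalizing φ with
  | zero => simp [variance_eq_integral]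
  | succ n ih =>
    have hindep : (fun ω ↦ ∑ k ∈ Finset.range n, X k ω) ⟂ᵢ[μ] X n := by
      simpa only [← Finset.sum_fn] using
        hind.indepFun_finsetSum_of_notMem hX Finset.notMem_range_self
    have hS : MemLp (fun ω ↦ ∑ k ∈ Finset.range n, X k ω) 2 μ :=
      memLp_finsetSum _ fun i _ ↦ hX2 i
    simp only [Finset.sum_range_succ]
    calc _ ≤ _ := hφ.variance_comp_add_le hindep hS (hX2 n)
      _ ≤ _ := add_le_add_left (ih (hφ.integral_comp_add ((hX2 n).integrable one_le_two))) _
      _ = _ := by ring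

end Variance

theorem integral_Ioi_inv_add_sq {R : ℝ} (hR : 0 < R) : ∫ t in Ioi 0, ((R + t) ^ 2)⁻¹ = R⁻¹ := by
  have hderiv : ∀ t ∈ Ici (0 : ℝ), HasDerivAt (fun t ↦ -(R + t)⁻¹) ((R + t) ^ 2)⁻¹ t :=
    fun t (ht : 0 ≤ t) ↦ (((hasDerivAt_id t).const_add R).inv (by positivity)).neg.congr_deriv
      (by rw [neg_div, neg_neg, one_div, id])
  have hlim : Tendsto (fun t ↦ -(R + t)⁻¹) atTop (𝓝 0) := by
    simpa using (tendsto_atTop_add_const_left _ R tendsto_id).inv_tendsto_atTop.neg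
  rw [integral_Ioi_of_hasDerivAt_of_nonneg' hderiv (fun t _ ↦ by positivity) hlim]
  simp

theorem integrableOn_Ioi_inv_add_sq {R : ℝ} (hR : 0 < R) :
    IntegrableOn (fun t ↦ ((R + t) ^ 2)⁻¹) (Ioi 0) := by
  by_contra h
  have h0 := integral_undef h
  rw [integral_Ioi_inv_add_sq hR] at h0
  exact (inv_pos.2 hR).ne' h0

theorem integral_le_of_meas_gt_le_div_sq {Ω : Type*} [MeasurableSpace Ω] {μ : Measure Ω}
    [IsProbabilityMeasure μ] {f : Ω → ℝ} (hf : Integrable f μ) {R a : ℝ} (hR : 0 < R)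
    (htail : ∀ t, R ≤ t → μ.real {ω | t < f ω} ≤ a / t ^ 2) :
    ∫ ω, f ω ∂μ ≤ R + a / R := by
  have hg : Integrable (fun ω ↦ max (f ω - R) 0) μ := (hf.sub (integrable_const R)).pos_part
  have hsplit : ∫ ω, f ω ∂μ ≤ R + ∫ ω, max (f ω - R) 0 ∂μ := by
    calc ∫ ω, f ω ∂μ ≤ ∫ ω, (R + max (f ω - R) 0) ∂μ :=
          integral_mono hf ((integrable_const R).add hg) fun ω ↦ by
            linarith [le_max_left (f ω - R) 0]
      _ = R + ∫ ω, max (f ω - R) 0 ∂μ := by simp [integral_add (integrable_const R) hg]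
  have hlayer : ∫ ω, max (f ω - R) 0 ∂μ ≤ ∫ t in Ioi 0, a * ((R + t) ^ 2)⁻¹ := by
    rw [hg.integral_eq_integral_meas_lt (ae_of_all _ fun ω ↦ le_max_right _ _)]
    refine integral_mono_of_nonneg (ae_of_all _ fun t ↦ measureReal_nonneg)
      ((integrableOn_Ioi_inv_add_sq hR).const_mul a)
      ((ae_restrict_iff' measurableSet_Ioi).2 (ae_of_all _ fun t (ht : 0 < t) ↦ ?_))
    have hset : {ω | t < max (f ω - R) 0} = {ω | R + t < f ω} := by
      ext ω
      change t < max (f ω - R) 0 ↔ R + t < f ω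
      rw [lt_max_iff, or_iff_left ht.not_gt]
      constructor <;> intro h <;> linarith
    change μ.real {ω | t < max (f ω - R) 0} ≤ a * ((R + t) ^ 2)⁻¹
    rw [hset, ← div_eq_mul_inv]
    exact htail (R + t) (by linarith)
  rw [integral_const_mul, integral_Ioi_inv_add_sq hR, ← div_eq_mul_inv] at hlayer
  linarith

theorem exitTime_le_of_lt_norm_sum {Ω B : Type*} [NormedAddCommGroup B] {X : ℕ → Ω → B}
    {r : ℝ} {ω : Ω} {n : ℕ} (h : r < ‖∑ k ∈ Finset.range n, X k ω‖) :
    exitTime X r ω ≤ n :=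
  sInf_le ⟨n, rfl, h⟩

section RandomWalk

variable {Ω B : Type*} [MeasurableSpace Ω] {μ : Measure Ω} [IsProbabilityMeasure μ]
  [NormedAddCommGroup B] {X : ℕ → Ω → B}

theorem measureReal_lt_norm_sum_le_exitTime {r : ℝ} {n : ℕ} :
    μ.real {ω | r < ‖∑ k ∈ Finset.range n, X k ω‖} ≤ μ.real {ω | exitTime X r ω ≤ n} :=
  measureReal_mono fun _ ↦ exitTime_le_of_lt_norm_sum

variable [MeasurableSpace B] [BorelSpace B] [SecondCountableTopology B]

theorem variance_norm_sum_le (hX : ∀ i, Measurable (X i)) (hind : iIndepFun X μ)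
    (hid : ∀ i, IdentDistrib (X i) (X 0) μ μ) (h2 : MemLp (X 0) 2 μ) (n : ℕ) :
    Var[fun ω ↦ ‖∑ k ∈ Finset.range n, X k ω‖; μ] ≤ n * ∫ ω, ‖X 0 ω‖ ^ 2 ∂μ := by
  have hmoment : ∀ k, ∫ ω, ‖X k ω‖ ^ 2 ∂μ = ∫ ω, ‖X 0 ω‖ ^ 2 ∂μ := fun k ↦
    ((hid k).comp (measurable_norm.pow_const 2)).integral_eq
  simpa [hmoment] using
    lipschitzWith_one_norm.variance_comp_sum_le hX hind (fun i ↦ (hid i).symm.memLp_snd h2) n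

theorem eventually_integral_norm_sum_sq_le (hX : ∀ i, Measurable (X i)) (hind : iIndepFun X μ)
    (hid : ∀ i, IdentDistrib (X i) (X 0) μ μ) (h2 : MemLp (X 0) 2 μ) {a r₀ : ℝ} (ha : 0 < a)
    (htail : ∀ n : ℕ, 1 ≤ n → ∀ r, r₀ ≤ r →
      μ.real {ω | r < ‖∑ k ∈ Finset.range n, X k ω‖} ≤ a * n / r ^ 2) :
    ∀ᶠ n : ℕ in atTop,
      ∫ ω, ‖∑ k ∈ Finset.range n, X k ω‖ ^ 2 ∂μ ≤ (∫ ω, ‖X 0 ω‖ ^ 2 ∂μ + 4 * a) * n := by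
  have hscale : Tendsto (fun n : ℕ ↦ √(a * n)) atTop atTop :=
    Real.tendsto_sqrt_atTop.comp (tendsto_natCast_atTop_atTop.const_mul_atTop ha)
  filter_upwards [hscale.eventually_ge_atTop r₀, eventually_ge_atTop 1] with n hr₀ hn
  set S : Ω → ℝ := fun ω ↦ ‖∑ k ∈ Finset.range n, X k ω‖
  have hS : MemLp S 2 μ := (memLp_finsetSum _ fun i _ ↦ (hid i).symm.memLp_snd h2).norm
  have han : 0 < a * n := mul_pos ha (by exact_mod_cast hn)
  -- `√(a n)` minimizes `R + a n / R`
  have hmean : μ[S] ≤ 2 * √(a * n) := by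
    have h := integral_le_of_meas_gt_le_div_sq (hS.integrable one_le_two)
      (Real.sqrt_pos.2 han) fun t ht ↦ htail n hn t (hr₀.trans ht)
    rwa [Real.div_sqrt, ← two_mul] at h
  have hmean_sq : μ[S] ^ 2 ≤ 4 * (a * n) := by
    calc μ[S] ^ 2 ≤ (2 * √(a * n)) ^ 2 :=
          pow_le_pow_left₀ (integral_nonneg fun ω ↦ norm_nonneg _) hmean 2
      _ = 4 * (a * n) := by rw [mul_pow, Real.sq_sqrt han.le]; norm_num
  have hvar := variance_norm_sum_le hX hind hid h2 n
  have hsq := integral_sub_const_sq hS 0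
  simp only [sub_zero] at hsq
  rw [hsq]
  linarith

end RandomWalk

theorem stmt16_general {B : Type*} [NormedAddCommGroup B] [NormedSpace ℝ B] [MeasurableSpace B]
    [BorelSpace B] [SecondCountableTopology B]
    (c : ℝ) (hc : 0 < c)
    (H : ∀ (Ω : Type) [MeasureSpace Ω] [IsProbabilityMeasure (ℙ : Measure Ω)]
      (X : ℕ → Ω → B), (∀ i, Measurable (X i)) →
      iIndepFun X ℙ →
      (∀ i, IdentDistrib (X i) (X 0) ℙ ℙ) →
      MemLp (X 0) 2 ℙ → (∫ ω, X 0 ω) = 0 →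
      ∀ b : ℝ, c * (∫ ω, ‖X 0 ω‖ ^ 2) < b →
        ∀ᶠ r : ℝ in atTop, ∀ n : ℕ, 1 ≤ n →
          r ^ 2 * (ℙ {ω | exitTime X r ω ≤ (n : ℕ∞)}).toReal / n ≤ b) :
    ∀ (Ω : Type) [MeasureSpace Ω] [IsProbabilityMeasure (ℙ : Measure Ω)]
      (X : ℕ → Ω → B), (∀ i, Measurable (X i)) →
      iIndepFun X ℙ →
      (∀ i, IdentDistrib (X i) (X 0) ℙ ℙ) →
      MemLp (X 0) 2 ℙ → (∫ ω, X 0 ω) = 0 →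
      ∀ b : ℝ, (4 + 9 * c) * (∫ ω, ‖X 0 ω‖ ^ 2) < b →
        ∀ᶠ n : ℕ in atTop,
          (∫ ω, ‖∑ k ∈ Finset.range n, X k ω‖ ^ 2) / n ≤ b := by
  intro Ω _ _ X hX hind hid h2 hmean b hb
  set I := ∫ ω, ‖X 0 ω‖ ^ 2
  have hI : 0 ≤ I := integral_nonneg fun ω ↦ by positivity
  -- any `a` strictly between `c I` and `(b - I) / 4` works
  set a := (c * I + (b - I) / 4) / 2 with ha_def
  have hcI : 0 ≤ c * I := mul_nonneg hc.le hI
  have hca : c * I < a := by linarith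
  have ha : 0 < a := by linarith
  have hab : I + 4 * a < b := by linarith
  obtain ⟨r₀, hr₀⟩ := (H Ω X hX hind hid h2 hmean a hca).exists_forall_of_atTop
  have htail : ∀ n : ℕ, 1 ≤ n → ∀ r, max r₀ 1 ≤ r →
      (ℙ {ω | r < ‖∑ k ∈ Finset.range n, X k ω‖}).toReal ≤ a * n / r ^ 2 := by
    intro n hn r hr
    have hexit := hr₀ r (le_of_max_le_left hr) n hn
    have hr2 : 0 < r ^ 2 := by have := le_of_max_le_right hr; positivity
    rw [div_le_iff₀ (by exact_mod_cast hn), mul_comm] at hexit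
    rw [le_div_iff₀ hr2]
    exact (mul_le_mul_of_nonneg_right measureReal_lt_norm_sum_le_exitTime hr2.le).trans hexit
  filter_upwards [eventually_integral_norm_sum_sq_le hX hind hid h2 ha htail,
    eventually_ge_atTop 1] with n hn hn1
  rw [div_le_iff₀ (by exact_mod_cast hn1)]
  exact hn.trans (mul_le_mul_of_nonneg_right hab.le n.cast_nonneg)

/-- if there is a constant `c` such that for every mean-zero
square-integrable `B`-valued `X`,
`limsup_{r→∞} sup_{n ≥ 1} r² P(T_r ≤ n)/n ≤ c E‖X‖²`
(expressed via: every `b` above the bound is an eventual upper bound), then for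
every such `X`, `limsup_{n→∞} E‖Sₙ‖²/n ≤ (4 + 9c) E‖X‖²`; in particular `B`
is type 2. -/
theorem stmt16 {B : Type*} [NormedAddCommGroup B] [NormedSpace ℝ B] [MeasurableSpace B]
    [BorelSpace B] [SecondCountableTopology B] [CompleteSpace B]
    (c : ℝ) (hc : 0 < c)
    (H : ∀ (Ω : Type) [MeasureSpace Ω] [IsProbabilityMeasure (ℙ : Measure Ω)]
      (X : ℕ → Ω → B), (∀ i, Measurable (X i)) →
      iIndepFun X ℙ →
      (∀ i, IdentDistrib (X i) (X 0) ℙ ℙ) →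
      MemLp (X 0) 2 ℙ → (∫ ω, X 0 ω) = 0 →
      ∀ b : ℝ, c * (∫ ω, ‖X 0 ω‖ ^ 2) < b →
        ∀ᶠ r : ℝ in atTop, ∀ n : ℕ, 1 ≤ n →
          r ^ 2 * (ℙ {ω | exitTime X r ω ≤ (n : ℕ∞)}).toReal / n ≤ b) :
    ∀ (Ω : Type) [MeasureSpace Ω] [IsProbabilityMeasure (ℙ : Measure Ω)]
      (X : ℕ → Ω → B), (∀ i, Measurable (X i)) →
      iIndepFun X ℙ →
      (∀ i, IdentDistrib (X i) (X 0) ℙ ℙ) →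
      MemLp (X 0) 2 ℙ → (∫ ω, X 0 ω) = 0 →
      ∀ b : ℝ, (4 + 9 * c) * (∫ ω, ‖X 0 ω‖ ^ 2) < b →
        ∀ᶠ n : ℕ in atTop,
          (∫ ω, ‖∑ k ∈ Finset.range n, X k ω‖ ^ 2) / n ≤ b :=
  stmt16_general c hc H
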